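/- arXiv:1802.10409 — 6 statements merged into one kernel-verified Lean document; each statement's English description precedes it below -/
import Mathlib

section
/- For positive integers p ≤ q and n = q - p + 1, the sum over all subsequences (i_1,...,i_κ) of (1,...,p) of length κ with 1 ≤ κ ≤ min(n,p), of α_{i_1}···α_{i_κ} · S_{n-κ}(α_{i_1},...,α_{i_κ}), equals S_n(α_1,...,α_p), where S_k denotes the complete homogeneous symmetric polynomial of degree k (with S_0 = 1). -/
open Finset

/-- The complete homogeneous symmetric polynomial of degree `k` in the values `f i`
for `i` ranging over the finite set `s`: the sum, over all multisets of size `k`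
with elements in `s`, of the product of the values. In particular `hsym 0 s f = 1`. -/
noncomputable def hsym {R ι : Type*} [CommSemiring R] [DecidableEq ι]
    (k : ℕ) (s : Finset ι) (f : ι → R) : R :=
  ∑ m ∈ s.sym k, ((m : Multiset ι).map f).prod

/-- For positive integers `p ≤ q` and `n = q - p + 1`, the sum over all nonempty
subsequences `I` of `(1,…,p)` of length `κ ≤ min n p` of
`α_{i₁}⋯α_{i_κ} · S_{n-κ}(α_{i₁},…,α_{i_κ})` equals `S_n(α₁,…,α_p)`. -/
theorem stmt0 {R : Type*} [CommSemiring R] (p q n : ℕ) (hp : 0 < p) (hpq : p ≤ q)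
    (hn : n = q - p + 1) (α : Fin p → R) :
    ∑ I ∈ (Finset.univ : Finset (Fin p)).powerset.filter
        (fun I => 1 ≤ I.card ∧ I.card ≤ min n p),
      (∏ i ∈ I, α i) * hsym (n - I.card) I α
      = hsym n (Finset.univ : Finset (Fin p)) α := by
  classical
  have hn1 : 1 ≤ n := by omega
  set e : ∀ k : ℕ, Sym (Fin p) k ↪ Multiset (Fin p) :=
    fun k => ⟨Sym.toMultiset, fun a b h => Subtype.ext h⟩ with he
  have key : ∀ (k : ℕ) (s : Finset (Fin p)),
      hsym k s α = ∑ t ∈ (s.sym k).map (e k), (t.map α).prod := by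
    intro k s
    rw [Finset.sum_map]
    rfl
  have hmem : ∀ (k : ℕ) (s : Finset (Fin p)) (t : Multiset (Fin p)),
      t ∈ (s.sym k).map (e k) ↔ Multiset.card t = k ∧ ∀ a ∈ t, a ∈ s := by
    intro k s t
    simp only [Finset.mem_map, Finset.mem_sym_iff]
    constructor
    · rintro ⟨⟨m, hm⟩, hmem, rfl⟩
      exact ⟨hm, fun a ha => hmem a ha⟩
    · rintro ⟨hc, hall⟩
      exact ⟨⟨t, hc⟩, fun a ha => hall a ha, rfl⟩
  simp only [key, Finset.mul_sum]
  rw [Finset.sum_sigma']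
  refine Finset.sum_bij' (fun x _ => x.1.1 + x.2)
    (fun m _ => ⟨m.toFinset, m - m.toFinset.1⟩) ?_ ?_ ?_ ?_ ?_
  · rintro ⟨I, t⟩ hx
    simp only [Finset.mem_sigma, Finset.mem_filter, le_min_iff, hmem] at hx
    rw [hmem]
    refine ⟨?_, fun a _ => Finset.mem_univ a⟩
    simp only [Multiset.card_add, hx.2.1, ← Finset.card_def]
    have := hx.1.2.2.1
    omega
  · rintro m hm
    rw [hmem] at hm
    simp only [Finset.mem_sigma, Finset.mem_filter, Finset.mem_powerset, le_min_iff, hmem]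
    have hle : m.toFinset.1 ≤ m := Multiset.dedup_le _
    have hc : Multiset.card (m - m.toFinset.1) = Multiset.card m - m.toFinset.card :=
      Multiset.card_sub hle
    refine ⟨⟨Finset.subset_univ _, ?_, ?_, Finset.card_le_univ _ |>.trans (by simp)⟩, ?_, ?_⟩
    · rw [Finset.one_le_card]
      have : m ≠ 0 := by
        intro h; rw [h] at hm; simp at hm; omega
      obtain ⟨a, ha'⟩ := Multiset.exists_mem_of_ne_zero this
      exact ⟨a, Multiset.mem_toFinset.2 ha'⟩
    · calc m.toFinset.card ≤ Multiset.card m := Multiset.toFinset_card_le m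
        _ = n := hm.1
    · rw [hc, hm.1, Finset.card_def]
    · intro a ha'
      exact Multiset.mem_toFinset.2 (Multiset.mem_of_le tsub_le_self ha')
  · rintro ⟨I, t⟩ hx
    simp only [Finset.mem_sigma, Finset.mem_filter, le_min_iff, hmem] at hx
    have h1 : (I.1 + t).toFinset = I := by
      rw [Multiset.toFinset_add, Finset.val_toFinset]
      exact Finset.union_eq_left.2 fun a hamem => hx.2.2 a (Multiset.mem_toFinset.1 hamem)
    refine Sigma.ext h1 (heq_of_eq ?_)
    show (I.1 + t) - ((I.1 + t).toFinset).1 = t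
    rw [h1]
    exact add_tsub_cancel_left _ _
  · rintro m _
    exact add_tsub_cancel_of_le (Multiset.dedup_le m)
  · rintro ⟨I, t⟩ _
    show (∏ i ∈ I, α i) * (t.map α).prod = ((I.1 + t).map α).prod
    rw [Multiset.map_add, Multiset.prod_add, Finset.prod_eq_multiset_prod]
end

section
/- Let L be a field, let β_1,...,β_s be linearly independent L-linear forms on the polynomial ring L[X_1,...,X_n], and for each k in {1,...,n} let M_k be an s×s matrix over L such that for every polynomial h, the column vector (β_1(X_k h),...,β_s(X_k h)) equals M_k times (β_1(h),...,β_s(h)). Then the matrices M_1,...,M_n pairwise commute. -/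
/-- If `β₁,…,β_s` are linearly independent `L`-linear forms on `L[X₁,…,Xₙ]` and for
each `k` the matrix `M k` satisfies `(βᵢ(X_k h))ᵢ = M k ⬝ (βᵢ(h))ᵢ` for every
polynomial `h`, then the matrices `M 1, …, M n` pairwise commute. -/
theorem stmt1 {L : Type*} [Field L] (n s : ℕ)
    (β : Fin s → (MvPolynomial (Fin n) L →ₗ[L] L))
    (hβ : LinearIndependent L β)
    (M : Fin n → Matrix (Fin s) (Fin s) L)
    (hM : ∀ (h : MvPolynomial (Fin n) L) (k : Fin n),
      (fun i => β i (MvPolynomial.X k * h)) = (M k).mulVec (fun i => β i h)) :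
    ∀ k k' : Fin n, M k * M k' = M k' * M k := by
  intro k k'
  have key : ∀ h : MvPolynomial (Fin n) L,
      (M k * M k').mulVec (fun i => β i h) = (M k' * M k).mulVec (fun i => β i h) := by
    intro h
    rw [← Matrix.mulVec_mulVec, ← Matrix.mulVec_mulVec, ← hM, ← hM, ← hM, ← hM]
    congr 1
    ring
  have hz : ∀ j, (fun i => (M k * M k' - M k' * M k) j i) = 0 := by
    intro j
    have := Fintype.linearIndependent_iff.mp hβ
      (fun i => (M k * M k' - M k' * M k) j i) ?_
    · funext i; exact this i
    · refine LinearMap.ext fun h => ?_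
      have hj := congrFun (key h) j
      simp only [Matrix.mulVec, dotProduct] at hj
      simp only [LinearMap.coe_sum, LinearMap.coe_smulRight, Finset.sum_apply,
        LinearMap.smul_apply, LinearMap.zero_apply, smul_eq_mul,
        Matrix.sub_apply, sub_mul, Finset.sum_sub_distrib]
      rw [hj]; ring
  have : M k * M k' - M k' * M k = 0 := by
    ext j i
    have := congrFun (hz j) i
    simpa using this
  exact sub_eq_zero.mp this
end

section
/- Let K be an algebraically closed field and let V ⊂ K^n be the zero set of polynomials C. Suppose μ is an integer such that either the origin 0 is an isolated point of V with multiplicity at most μ with respect to ⟨C⟩, or 0 lies in a positive-dimensional component of V. Let I = ⟨C⟩ + m^{μ+1} where m = ⟨X_1,...,X_n⟩. Then 0 is an isolated point of V if and only if the multiplicity of I at the origin (i.e., dim of the local quotient) is at most μ. -/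
/-!
Work in the power series ring `K⟦X⟧`, where the multiplicity is `dim_K K⟦X⟧ ⧸ A` for the
extension `A` of `⟨C⟩`; let `𝔪` be the ideal of the variables.

If `0` is isolated, the Nullstellensatz puts `h X_i` in `√⟨C⟩` for a polynomial `h` with
`h(0) ≠ 0`; as `h` is a unit of `K⟦X⟧`, some `𝔪^k` lies in `A`. Then `K⟦X⟧ ⧸ A` is
finite-dimensional and surjects onto `K⟦X⟧ ⧸ (A + 𝔪^(μ+1))`, whose dimension is therefore at
most the multiplicity, hence at most `μ`.

Conversely, if `dim_K K⟦X⟧ ⧸ (A + 𝔪^(μ+1)) ≤ μ`, the chain `A + 𝔪^k`, `k = 0, …, μ + 1`, cannot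
drop at every step, so `A + 𝔪^(k+1) = A + 𝔪^k` for some `k`, and Nakayama gives `𝔪^k ⊆ A`.
Truncating power series brings this back to `𝔪^k ⊆ ⟨C⟩ + 𝔪^(k+1)` in `K[X]`, and Nakayama there
yields `r ≡ 1 mod 𝔪` with `r 𝔪^k ⊆ ⟨C⟩`: at a common zero `y` of `C` with `r(y) ≠ 0` every
`y_i^k` vanishes, so `y = 0`.
-/

open MvPolynomial

/-- `x` is an isolated point of the zero set `V(I) ⊆ K^n` (for the Zariski
topology): `x ∈ V(I)` and there is a polynomial `h` with `h(x) ≠ 0` such that `x`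
is the only point of `V(I)` where `h` does not vanish. -/
def IsIsolatedZero {σ K : Type*} [CommRing K] (I : Ideal (MvPolynomial σ K))
    (x : σ → K) : Prop :=
  (∀ f ∈ I, MvPolynomial.eval x f = 0) ∧
  ∃ h : MvPolynomial σ K, MvPolynomial.eval x h ≠ 0 ∧
    ∀ y : σ → K, (∀ f ∈ I, MvPolynomial.eval y f = 0) → MvPolynomial.eval y h ≠ 0 → y = x

/-- The multiplicity of the point `pt` with respect to the ideal `I`: the
`K`-dimension of the quotient of the formal power series ring by the extension of
`I` translated so that `pt` becomes the origin. -/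
noncomputable def multAt {σ K : Type*} [Field K]
    (I : Ideal (MvPolynomial σ K)) (pt : σ → K) : ℕ :=
  Module.finrank K (MvPowerSeries σ K ⧸
    Ideal.map ((MvPolynomial.coeToMvPowerSeries.ringHom).comp
      ((MvPolynomial.aeval
        (fun v => MvPolynomial.X v + MvPolynomial.C (pt v)) :
          MvPolynomial σ K →ₐ[K] MvPolynomial σ K)).toRingHom) I)

theorem Submodule.exists_succ_eq_of_antitone {K V : Type*} [DivisionRing K] [AddCommGroup V]
    [Module K V] [FiniteDimensional K V] {F : ℕ → Submodule K V} (hF : Antitone F) {μ : ℕ}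
    (hμ : Module.finrank K V ≤ μ) : ∃ k ≤ μ, F (k + 1) = F k := by
  by_contra! hne
  have hdrop : ∀ j ≤ μ + 1, Module.finrank K (F j) + j ≤ Module.finrank K V := by
    intro j
    induction j with
    | zero => exact fun _ => Submodule.finrank_le (F 0)
    | succ j ih =>
      intro hj
      have := ih (by omega)
      have := Submodule.finrank_lt_finrank_of_lt
        ((hF (j.le_add_right 1)).lt_of_ne (hne j (by omega)))
      omega
  have := hdrop (μ + 1) le_rfl
  omega

namespace Ideal

variable {R : Type*} [CommRing R]

theorem finrank_quotient_le_of_le {K : Type*} [Field K] [Algebra K R] {I J : Ideal R}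
    [Module.Finite K (R ⧸ I)] (h : I ≤ J) :
    Module.finrank K (R ⧸ J) ≤ Module.finrank K (R ⧸ I) :=
  LinearMap.finrank_le_finrank_of_surjective (f := (Quotient.factorₐ K h).toLinearMap)
    (Quotient.factor_surjective h)

theorem exists_sup_pow_succ_eq_of_finrank_le {K : Type*} [Field K] [Algebra K R] (J M : Ideal R)
    {μ : ℕ} [FiniteDimensional K (R ⧸ J ⊔ M ^ (μ + 1))]
    (hμ : Module.finrank K (R ⧸ J ⊔ M ^ (μ + 1)) ≤ μ) :
    ∃ k ≤ μ, J ⊔ M ^ (k + 1) = J ⊔ M ^ k := by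
  let F : ℕ → Submodule K (R ⧸ J ⊔ M ^ (μ + 1)) := fun k =>
    ((J ⊔ M ^ k).map (Quotient.mk _)).restrictScalars K
  have hF : Antitone F := fun i j hij =>
    Submodule.restrictScalars_mono _ (map_mono (sup_le_sup_left (pow_le_pow_right hij) _))
  obtain ⟨k, hk, hFk⟩ := Submodule.exists_succ_eq_of_antitone hF hμ
  have hle : ∀ j ≤ μ + 1, J ⊔ M ^ (μ + 1) ≤ J ⊔ M ^ j := fun j hj =>
    sup_le_sup_left (pow_le_pow_right hj) _
  refine ⟨k, hk, ?_⟩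
  rw [← comap_map_mk (hle (k + 1) (by omega)), ← comap_map_mk (hle k (by omega)),
    Submodule.restrictScalars_injective K _ _ hFk]

theorem pow_le_of_sup_pow_succ_eq {J M : Ideal R} {k : ℕ} (hfg : (M ^ k).FG)
    (hM : M ≤ jacobson ⊥) (h : J ⊔ M ^ (k + 1) = J ⊔ M ^ k) : M ^ k ≤ J :=
  Submodule.le_of_le_smul_of_le_jacobson_bot hfg hM <| by
    rw [smul_eq_mul, ← pow_succ', h]
    exact le_sup_right

end Ideal

namespace MvPowerSeries

variable {σ R : Type*} [CommRing R]

theorem algebraMap_mvPolynomial_eq_coe :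
    algebraMap (MvPolynomial σ R) (MvPowerSeries σ R) = coeToMvPowerSeries.ringHom := by
  refine RingHom.ext fun p => ?_
  rw [algebraMap_apply', Algebra.algebraMap_self, map_id]
  rfl

theorem map_coe_idealOfVars :
    (idealOfVars σ R).map coeToMvPowerSeries.ringHom =
      Ideal.span (Set.range (X : σ → MvPowerSeries σ R)) := by
  rw [Ideal.map_span, ← Set.range_comp]
  congr 2
  ext1 i
  simp

theorem span_X_le_jacobson_bot :
    Ideal.span (Set.range (X : σ → MvPowerSeries σ R)) ≤ Ideal.jacobson ⊥ := by
  rw [Ideal.span_le]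
  rintro _ ⟨i, rfl⟩
  refine Ideal.mem_jacobson_bot.2 fun y => ?_
  rw [isUnit_iff_constantCoeff]
  simp

variable [Finite σ]

/-- Through `MvPowerSeries.toAdicCompletionAlgEquiv`, where the kernel of evaluation at level `N`
is `𝔪^N • ⊤` (`AdicCompletion.pow_smul_top_eq_ker_eval`). -/
theorem mem_span_X_pow_of_coeff_eq_zero {N : ℕ} {f : MvPowerSeries σ R}
    (hf : ∀ d : σ →₀ ℕ, d.degree < N → coeff d f = 0) :
    f ∈ Ideal.span (Set.range (X : σ → MvPowerSeries σ R)) ^ N := by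
  set e := toAdicCompletionAlgEquiv σ R
  have htrunc : truncTotal N f = 0 := by
    ext d
    rw [coeff_truncTotal_eq_ite]
    split_ifs with hd
    · simp [hf d hd]
    · simp
  have he : e f ∈ idealOfVars σ R ^ N • (⊤ : Submodule (MvPolynomial σ R) _) := by
    rw [AdicCompletion.pow_smul_top_eq_ker_eval (idealOfVars_fg σ R), LinearMap.mem_ker]
    change (toAdicCompletion σ R f).val N = 0
    rw [toAdicCompletion_apply_eq_mk_truncTotal, htrunc]
    rfl
  have hf' := Submodule.mem_map_of_mem (f := e.symm.toLinearEquiv.toLinearMap) he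
  rw [Submodule.map_smul'', Submodule.map_top, LinearEquiv.range, Ideal.smul_top_eq_map,
    LinearEquiv.coe_coe, AlgEquiv.toLinearEquiv_apply, AlgEquiv.symm_apply_apply,
    Submodule.restrictScalars_mem, Ideal.map_pow] at hf'
  rwa [algebraMap_mvPolynomial_eq_coe, map_coe_idealOfVars] at hf'

/-- Truncation at total degree `N` is a ring map `R⟦σ⟧ → R[σ] ⧸ 𝔪^N` extending the quotient map
(`MvPowerSeries.truncTotalAlgHom`). -/
theorem comap_coe_map_coe_le_sup_pow (A : Ideal (MvPolynomial σ R)) (N : ℕ) :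
    (A.map coeToMvPowerSeries.ringHom).comap coeToMvPowerSeries.ringHom ≤
      A ⊔ idealOfVars σ R ^ N := by
  intro w hw
  let ψ := (truncTotalAlgHom σ R N).toRingHom
  have hψ : ψ.comp coeToMvPowerSeries.ringHom = Ideal.Quotient.mk _ := by
    rw [← algebraMap_mvPolynomial_eq_coe]
    exact RingHom.ext (truncTotalAlgHom σ R N).commutes
  have hw' := Ideal.mem_map_of_mem ψ (Ideal.mem_comap.1 hw)
  rw [Ideal.map_map, hψ, ← RingHom.comp_apply, hψ] at hw'
  exact Ideal.mem_quotient_iff_mem_sup.1 hw'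

theorem finite_quotient_of_span_X_pow_le {K : Type*} [Field K] {J : Ideal (MvPowerSeries σ K)}
    {N : ℕ} (hJ : Ideal.span (Set.range X) ^ N ≤ J) : Module.Finite K (MvPowerSeries σ K ⧸ J) := by
  let s : Set (σ →₀ ℕ) := {d | d.degree < N}
  have : Finite s := (Finsupp.finite_of_degree_lt N).to_subtype
  have : Module.Finite K (restrictSupport K s) := .of_basis (basisRestrictSupport K s)
  let L := (Ideal.Quotient.mkₐ K J).toLinearMap ∘ₗ
    (coeToMvPowerSeries.algHom K).toLinearMap ∘ₗ (restrictSupport K s).subtype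
  refine .of_surjective L fun q => ?_
  obtain ⟨f, rfl⟩ := Ideal.Quotient.mk_surjective q
  have htrunc : truncTotal N f ∈ restrictSupport K s := by
    intro d hd
    by_contra hlt
    exact MvPolynomial.mem_support_iff.1 hd (coeff_truncTotal_eq_zero f (not_lt.1 hlt))
  refine ⟨⟨truncTotal N f, htrunc⟩, Ideal.Quotient.eq.2 (hJ ?_)⟩
  rw [← neg_mem_iff, neg_sub]
  refine mem_span_X_pow_of_coeff_eq_zero fun d hd => ?_
  simp [coeff_truncTotal f hd]

end MvPowerSeries

section IsolatedZero

variable {σ K : Type*}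

theorem isIsolatedZero_of_mul_X_pow_mem [CommRing K] [IsDomain K] {A : Ideal (MvPolynomial σ K)}
    (hA : ∀ f ∈ A, eval 0 f = 0) {r : MvPolynomial σ K} (hr : eval 0 r ≠ 0) {k : ℕ}
    (hrk : ∀ i, r * X i ^ k ∈ A) : IsIsolatedZero A 0 :=
  ⟨hA, r, hr, fun y hy hry => funext fun i => by
    have hyi := hy _ (hrk i)
    rw [map_mul, map_pow, eval_X] at hyi
    exact eq_zero_of_pow_eq_zero ((mul_eq_zero.1 hyi).resolve_left hry)⟩

theorem isIsolatedZero_of_span_X_pow_le_map_coe [CommRing K] [IsDomain K] [IsNoetherianRing K]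
    [Finite σ] {A : Ideal (MvPolynomial σ K)} (hA : ∀ f ∈ A, eval 0 f = 0) {k : ℕ}
    (hk : Ideal.span (Set.range MvPowerSeries.X) ^ k ≤ A.map coeToMvPowerSeries.ringHom) :
    IsIsolatedZero A 0 := by
  have hpoly : idealOfVars σ K ^ k ≤ A ⊔ idealOfVars σ K • idealOfVars σ K ^ k := by
    rw [smul_eq_mul, ← pow_succ']
    refine le_trans ?_ (MvPowerSeries.comap_coe_map_coe_le_sup_pow A (k + 1))
    rwa [← Ideal.map_le_iff_le_comap, Ideal.map_pow, MvPowerSeries.map_coe_idealOfVars]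
  obtain ⟨r, hr1, hrA⟩ := Submodule.exists_sub_one_mem_and_smul_le_of_fg_of_le_sup
    (IsNoetherian.noetherian _) le_rfl hpoly
  have hr0 : eval 0 (r - 1) = 0 := by
    refine (Ideal.span_le (I := RingHom.ker (eval 0)).2 ?_ hr1 : _)
    rintro _ ⟨i, rfl⟩
    simp
  rw [map_sub, map_one, sub_eq_zero] at hr0
  refine isIsolatedZero_of_mul_X_pow_mem hA (k := k) (hr0 ▸ one_ne_zero) fun i => hrA ?_
  exact Submodule.smul_mem_pointwise_smul _ r (idealOfVars σ K ^ k)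
    (Ideal.pow_mem_pow (Ideal.subset_span (Set.mem_range_self i)) k)

theorem exists_span_X_pow_le_map_coe_of_isIsolatedZero [Field K] [IsAlgClosed K] [Finite σ]
    {A : Ideal (MvPolynomial σ K)} (hA : IsIsolatedZero A 0) :
    ∃ k, Ideal.span (Set.range MvPowerSeries.X) ^ k ≤ A.map coeToMvPowerSeries.ringHom := by
  obtain ⟨-, h, hh0, huniq⟩ := hA
  have hrad : ∀ i, h * X i ∈ A.radical := fun i => by
    rw [← vanishingIdeal_zeroLocus_eq_radical (K := K), mem_vanishingIdeal_iff]
    intro x hx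
    by_cases hxh : eval x h = 0
    · simp [hxh]
    · obtain rfl := huniq x hx hxh
      simp
  have hunit : IsUnit (h : MvPowerSeries σ K) := by
    rw [MvPowerSeries.isUnit_iff_constantCoeff, ← MvPowerSeries.coeff_zero_eq_constantCoeff_apply,
      coeff_coe, isUnit_iff_ne_zero]
    rwa [eval_zero, constantCoeff_eq] at hh0
  refine Ideal.exists_pow_le_of_le_radical_of_fg ?_ (IsNoetherian.noetherian _)
  rw [Ideal.span_le]
  rintro _ ⟨i, rfl⟩
  have hmap := Ideal.map_radical_le coeToMvPowerSeries.ringHom (Ideal.mem_map_of_mem _ (hrad i))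
  rw [map_mul, coeToMvPowerSeries.ringHom_apply, coeToMvPowerSeries.ringHom_apply, coe_X] at hmap
  exact (Ideal.unit_mul_mem_iff_mem _ hunit).1 hmap

end IsolatedZero

theorem multAt_zero {σ K : Type*} [Field K] (I : Ideal (MvPolynomial σ K)) :
    multAt I 0 = Module.finrank K (MvPowerSeries σ K ⧸ I.map coeToMvPowerSeries.ringHom) := by
  have hshift : (fun v => X v + C ((0 : σ → K) v) : σ → MvPolynomial σ K) = X := by
    funext v
    simp
  unfold multAt
  rw [hshift, aeval_X_left]
  rfl

/-- Local dimension test: let `C` vanish at the origin and suppose `μ` bounds the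
multiplicity of the origin whenever it is an isolated point of `V(C)` (assumption
`A`: either `0` is isolated of multiplicity `≤ μ`, or `0` lies in a
positive-dimensional component, i.e. is not isolated).  Then `0` is isolated in
`V(C)` if and only if the multiplicity at the origin of
`I = ⟨C⟩ + 𝔪^{μ+1}` is at most `μ`. -/
theorem stmt5 (K : Type*) [Field K] [IsAlgClosed K] (n m μ : ℕ)
    (c : Fin m → MvPolynomial (Fin n) K)
    (hc : ∀ i, MvPolynomial.eval (0 : Fin n → K) (c i) = 0)
    (hA : IsIsolatedZero (Ideal.span (Set.range c)) (0 : Fin n → K) →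
      multAt (Ideal.span (Set.range c)) (0 : Fin n → K) ≤ μ) :
    IsIsolatedZero (Ideal.span (Set.range c)) (0 : Fin n → K) ↔
      multAt
        (Ideal.span (Set.range c) ⊔
          (Ideal.span (Set.range (MvPolynomial.X : Fin n → MvPolynomial (Fin n) K))) ^ (μ + 1))
        (0 : Fin n → K) ≤ μ := by
  have hvanish : ∀ f ∈ Ideal.span (Set.range c), eval 0 f = 0 := fun f hf =>
    (Ideal.span_le (I := RingHom.ker (eval 0))).2 (by rintro _ ⟨i, rfl⟩; exact hc i) hf
  rw [multAt_zero] at hA ⊢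
  rw [Ideal.map_sup, Ideal.map_pow, MvPowerSeries.map_coe_idealOfVars]
  set J := (Ideal.span (Set.range c)).map coeToMvPowerSeries.ringHom
  constructor
  · intro hiso
    obtain ⟨k, hk⟩ := exists_span_X_pow_le_map_coe_of_isIsolatedZero hiso
    have := MvPowerSeries.finite_quotient_of_span_X_pow_le hk
    exact (Ideal.finrank_quotient_le_of_le le_sup_left).trans (hA hiso)
  · intro hdim
    have := MvPowerSeries.finite_quotient_of_span_X_pow_le (N := μ + 1) (le_sup_right (a := J))
    obtain ⟨k, -, hk⟩ := Ideal.exists_sup_pow_succ_eq_of_finrank_le _ _ hdim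
    exact isIsolatedZero_of_span_X_pow_le_map_coe hvanish <| Ideal.pow_le_of_sup_pow_succ_eq
      (IsNoetherian.noetherian _) MvPowerSeries.span_X_le_jacobson_bot hk
end

section
/- Let K be an algebraically closed field, J' an ideal of K[T,X_1,...,X_n] whose associated primes all contain no nonzero polynomial in K[T], and let τ ∈ K. If monomials m_1,...,m_k in X_1,...,X_n are K-linearly independent modulo J' + ⟨T - τ⟩, then they are K(T)-linearly independent modulo the extension of J' in K(T)[X_1,...,X_n]. Consequently, dim_K K[T,X]/(J' + ⟨T-τ⟩) ≤ dim_{K(T)} K(T)[X]/J'·K(T)[X]. -/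
/-!
Since no associated prime of `J'` meets `K[T] ∖ {0}`, every nonzero `a ∈ K[T]` is a
nonzerodivisor modulo `J'`; hence `J'` is contracted from `K(T)[X]` and it suffices to prove
`K[T]`-linear independence modulo `J'`. Given a relation `∑ pᵢ mᵢ ∈ J'`, reducing modulo
`T - τ` and using independence in the fiber shows that every `pᵢ` vanishes at `τ`; dividing by
`T - τ`, which is a nonzerodivisor modulo `J'`, gives a new relation, so every `pᵢ` is divisible
by all powers of `T - τ` and hence vanishes. The dimension inequality follows by applying this
to a basis of the fiber extracted from the monomials, which span it.
-/

open MvPolynomial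
open scoped Polynomial

theorem Ideal.mem_of_mul_mem_of_forall_notMem_associatedPrimes {R : Type*} [CommRing R]
    [IsNoetherianRing R] {I : Ideal R} {a f : R}
    (ha : ∀ P ∈ associatedPrimes R (R ⧸ I), a ∉ P) (h : a * f ∈ I) : f ∈ I := by
  by_contra hf
  have hzd : a ∈ ⋃ P ∈ associatedPrimes R (R ⧸ I), (P : Set R) := by
    rw [biUnion_associatedPrimes_eq_zero_divisors]
    refine ⟨Ideal.Quotient.mk I f, ?_, ?_⟩
    · rwa [ne_eq, Ideal.Quotient.eq_zero_iff_mem]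
    · rwa [Algebra.smul_def, Ideal.Quotient.algebraMap_eq, ← map_mul,
        Ideal.Quotient.eq_zero_iff_mem]
  obtain ⟨P, hP, haP⟩ := Set.mem_iUnion₂.mp hzd
  exact ha P hP haP

theorem IsLocalization.under_map_of_forall_mul_mem {R : Type*} [CommRing R] {M : Submonoid R}
    {S : Type*} [CommRing S] [Algebra R S] [IsLocalization M S] {I : Ideal R}
    (hI : ∀ m ∈ M, ∀ a, m * a ∈ I → a ∈ I) : (I.map (algebraMap R S)).under R = I := by
  refine le_antisymm (fun a ha ↦ ?_) Ideal.le_comap_map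
  rw [Ideal.mem_comap, IsLocalization.mem_map_algebraMap_iff M S] at ha
  obtain ⟨⟨b, s⟩, h⟩ := ha
  replace h : algebraMap R S (s * a) = algebraMap R S b := by
    simpa only [← map_mul, mul_comm] using h
  obtain ⟨c, hc⟩ := (IsLocalization.eq_iff_exists M S).1 h
  refine hI (c * s) (c * s).2 a ?_
  rw [mul_assoc, hc]
  exact I.mul_mem_left c b.2

universe u w in
theorem Module.rank_le_rank_of_linearIndepOn_imp {K F : Type*} {M N : Type u} {ι : Type w}
    [DivisionRing K] [Ring F] [Nontrivial F] [AddCommGroup M] [Module K M] [AddCommGroup N]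
    [Module F N] {v : ι → M} {w : ι → N} (hv : Submodule.span K (Set.range v) = ⊤)
    (h : ∀ s : Set ι, LinearIndepOn K v s → LinearIndepOn F w s) :
    Module.rank K M ≤ Module.rank F N := by
  obtain ⟨b, -, -, hspan, hb⟩ :=
    exists_linearIndepOn_extension (linearIndepOn_empty K v) (Set.empty_subset Set.univ)
  have htop : ⊤ ≤ Submodule.span K (Set.range fun x : b ↦ v x) := by
    rw [← hv, ← Set.image_univ, ← Set.image_eq_range]
    exact Submodule.span_le.mpr hspan
  refine Cardinal.lift_le.{w}.mp ?_
  rw [← (Module.Basis.mk hb htop).mk_eq_rank]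
  exact (h b hb).cardinal_lift_le_rank

namespace Polynomial

theorem smul_eq_eval_smul {R M : Type*} [CommRing R] [AddCommGroup M] [Module R[X] M]
    [Module R M] [IsScalarTower R R[X] M] {τ : R} (hτ : ∀ x : M, (X - C τ) • x = 0)
    (a : R[X]) (x : M) : a • x = a.eval τ • x := by
  obtain ⟨q, hq⟩ := X_sub_C_dvd_sub_C_eval (p := a) (a := τ)
  calc a • x = ((X - C τ) * q + C (a.eval τ)) • x := by rw [← hq, sub_add_cancel]
    _ = a.eval τ • x := by
      rw [add_smul, mul_comm, mul_smul, hτ, smul_zero, zero_add, ← algebraMap_eq,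
        algebraMap_smul]

theorem linearIndependent_of_forall_isRoot {R M ι : Type*} [CommRing R] [IsDomain R]
    [AddCommGroup M] [Module R[X] M] {τ : R} {v : ι → M}
    (hτ : ∀ y : M, (X - C τ) • y = 0 → y = 0)
    (hroot : ∀ (s : Finset ι) (p : ι → R[X]), ∑ i ∈ s, p i • v i = 0 → ∀ i ∈ s, (p i).IsRoot τ) :
    LinearIndependent R[X] v := by
  have hdvd : ∀ (N : ℕ) (s : Finset ι) (p : ι → R[X]), ∑ i ∈ s, p i • v i = 0 →
      ∀ i ∈ s, (X - C τ) ^ N ∣ p i := by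
    intro N
    induction N with
    | zero => simp
    | succ N ih =>
      intro s p hp i hi
      have hfactor : ∀ j ∈ s, (X - C τ) * (p j /ₘ (X - C τ)) = p j :=
        fun j hj ↦ mul_divByMonic_eq_iff_isRoot.mpr (hroot s p hp j hj)
      have hq : ∑ j ∈ s, (p j /ₘ (X - C τ)) • v j = 0 := by
        refine hτ _ ?_
        rw [Finset.smul_sum, ← hp]
        exact Finset.sum_congr rfl fun j hj ↦ by rw [← mul_smul, hfactor j hj]
      rw [← hfactor i hi, pow_succ']
      exact mul_dvd_mul_left _ (ih s _ hq i hi)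
  rw [linearIndependent_iff']
  intro s p hp i hi
  refine eq_zero_of_dvd_of_natDegree_lt (hdvd ((p i).natDegree + 1) s p hp i hi) ?_
  rw [natDegree_pow, natDegree_X_sub_C]
  omega

end Polynomial

namespace MvPolynomial

theorem smul_mk_eq_mk_C_mul {σ R : Type*} [CommRing R] (I : Ideal (MvPolynomial σ R)) (a : R)
    (f : MvPolynomial σ R) : a • Ideal.Quotient.mk I f = Ideal.Quotient.mk I (C a * f) := by
  rw [← smul_eq_C_mul]
  rfl

section Fiber

variable {σ K : Type*} [CommRing K] {τ : K}

theorem smul_mk_eq_eval_smul {I : Ideal (MvPolynomial σ K[X])}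
    (hI : C (Polynomial.X - Polynomial.C τ) ∈ I) (a : K[X]) (x : MvPolynomial σ K[X] ⧸ I) :
    a • x = a.eval τ • x := by
  refine Polynomial.smul_eq_eval_smul (fun y ↦ ?_) a x
  obtain ⟨f, rfl⟩ := Ideal.Quotient.mk_surjective y
  rw [smul_mk_eq_mk_C_mul, Ideal.Quotient.eq_zero_iff_mem]
  exact I.mul_mem_right f hI

theorem span_mk_monomial_one_eq_top {I : Ideal (MvPolynomial σ K[X])}
    (hI : C (Polynomial.X - Polynomial.C τ) ∈ I) :
    Submodule.span K (Set.range fun d ↦ Ideal.Quotient.mk I (monomial d (1 : K[X]))) = ⊤ := by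
  rw [eq_top_iff]
  rintro x -
  obtain ⟨f, rfl⟩ := Ideal.Quotient.mk_surjective x
  rw [f.as_sum, map_sum]
  refine Submodule.sum_mem _ fun d _ ↦ ?_
  rw [← mul_one (coeff d f), ← C_mul_monomial, ← smul_mk_eq_mk_C_mul, smul_mk_eq_eval_smul hI]
  exact Submodule.smul_mem _ _ (Submodule.subset_span ⟨d, rfl⟩)

theorem linearIndependent_mk_of_linearIndependent_mk_sup_span {ι : Type*} [IsDomain K]
    {J : Ideal (MvPolynomial σ K[X])}
    (hJ : ∀ f, C (Polynomial.X - Polynomial.C τ) * f ∈ J → f ∈ J) {μ : ι → MvPolynomial σ K[X]}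
    (hμ : LinearIndependent K fun i ↦
      Ideal.Quotient.mk (J ⊔ Ideal.span {C (Polynomial.X - Polynomial.C τ)}) (μ i)) :
    LinearIndependent K[X] fun i ↦ Ideal.Quotient.mk J (μ i) := by
  refine Polynomial.linearIndependent_of_forall_isRoot (τ := τ) (fun y hy ↦ ?_) fun s p hp ↦ ?_
  · obtain ⟨f, rfl⟩ := Ideal.Quotient.mk_surjective y
    rw [smul_mk_eq_mk_C_mul, Ideal.Quotient.eq_zero_iff_mem] at hy
    exact Ideal.Quotient.eq_zero_iff_mem.mpr (hJ f hy)
  · have hfiber := congrArg (Ideal.Quotient.factorₐ K[X]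
      (le_sup_left (b := Ideal.span {C (Polynomial.X - Polynomial.C τ)}))) hp
    simp only [map_sum, map_smul, map_zero,
      smul_mk_eq_eval_smul (Ideal.mem_sup_right (Ideal.mem_span_singleton_self _))] at hfiber
    exact fun i hi ↦ linearIndependent_iff'.mp hμ s _ hfiber i hi

end Fiber

section Localization

variable {σ ι A L : Type*} [CommRing A] [CommRing L] [Algebra A L] (S : Submonoid A)
  [IsLocalization S L] {J : Ideal (MvPolynomial σ A)}

attribute [local instance] algebraMvPolynomial in
theorem mem_of_map_mem_map_of_isLocalization (hJ : ∀ s ∈ S, ∀ f, C s * f ∈ J → f ∈ J)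
    {f : MvPolynomial σ A} (hf : map (algebraMap A L) f ∈ J.map (map (algebraMap A L))) :
    f ∈ J := by
  have hsat : ∀ m ∈ S.map (C (σ := σ)), ∀ g, m * g ∈ J → g ∈ J := by
    rintro _ ⟨s, hs, rfl⟩ g hg
    exact hJ s hs g hg
  rw [← IsLocalization.under_map_of_forall_mul_mem (S := MvPolynomial σ L) hsat]
  exact hf

theorem linearIndependent_mk_map_of_isLocalization (hJ : ∀ s ∈ S, ∀ f, C s * f ∈ J → f ∈ J)
    {μ : ι → MvPolynomial σ A} (hμ : LinearIndependent A fun i ↦ Ideal.Quotient.mk J (μ i)) :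
    LinearIndependent L fun i ↦
      Ideal.Quotient.mk (J.map (map (algebraMap A L))) (map (algebraMap A L) (μ i)) := by
  let φ := Ideal.quotientMapₐ (J.map (map (algebraMap A L))) (mapAlgHom (Algebra.ofId A L))
    Ideal.le_comap_map
  have hφ : Function.Injective φ := Ideal.quotientMap_injective' (H := Ideal.le_comap_map)
    fun f hf ↦ mem_of_map_mem_map_of_isLocalization S hJ hf
  exact (hμ.map' φ.toLinearMap (LinearMap.ker_eq_bot.mpr hφ)).localization L S

end Localization

theorem linearIndependent_mk_map_of_linearIndependent_mk_sup_span {σ ι K L : Type*}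
    [CommRing K] [IsDomain K] [CommRing L] [Algebra K[X] L] [IsFractionRing K[X] L]
    {J : Ideal (MvPolynomial σ K[X])}
    (hJ : ∀ a : K[X], a ≠ 0 → ∀ f, C a * f ∈ J → f ∈ J) (τ : K) {μ : ι → MvPolynomial σ K[X]}
    (hμ : LinearIndependent K fun i ↦
      Ideal.Quotient.mk (J ⊔ Ideal.span {C (Polynomial.X - Polynomial.C τ)}) (μ i)) :
    LinearIndependent L fun i ↦
      Ideal.Quotient.mk (J.map (map (algebraMap K[X] L))) (map (algebraMap K[X] L) (μ i)) :=
  linearIndependent_mk_map_of_isLocalization (nonZeroDivisors K[X])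
    (fun _ hs ↦ hJ _ (nonZeroDivisors.ne_zero hs))
    (linearIndependent_mk_of_linearIndependent_mk_sup_span
      (hJ _ (Polynomial.X_sub_C_ne_zero τ)) hμ)

end MvPolynomial

theorem stmt10_general (K : Type*) [Field K] (n k : ℕ)
    (J' : Ideal (MvPolynomial (Fin n) (Polynomial K)))
    (hass : ∀ P ∈ associatedPrimes (MvPolynomial (Fin n) (Polynomial K))
        ((MvPolynomial (Fin n) (Polynomial K)) ⧸ J'),
      ∀ a : Polynomial K, MvPolynomial.C a ∈ P → a = 0)
    (τ : K) (m : Fin k → MvPolynomial (Fin n) (Polynomial K))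
    (hind : LinearIndependent K (fun i =>
      Ideal.Quotient.mk
        (J' ⊔ Ideal.span {MvPolynomial.C (Polynomial.X - Polynomial.C τ)}) (m i))) :
    LinearIndependent (RatFunc K) (fun i =>
      Ideal.Quotient.mk
        (Ideal.map (MvPolynomial.map (algebraMap (Polynomial K) (RatFunc K))) J')
        (MvPolynomial.map (algebraMap (Polynomial K) (RatFunc K)) (m i)))
    ∧ Module.rank K
        ((MvPolynomial (Fin n) (Polynomial K)) ⧸
          (J' ⊔ Ideal.span {MvPolynomial.C (Polynomial.X - Polynomial.C τ)}))
      ≤ Module.rank (RatFunc K)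
        ((MvPolynomial (Fin n) (RatFunc K)) ⧸
          Ideal.map (MvPolynomial.map (algebraMap (Polynomial K) (RatFunc K))) J') := by
  have hsat : ∀ a : K[X], a ≠ 0 → ∀ f, C a * f ∈ J' → f ∈ J' := fun a ha _ ↦
    Ideal.mem_of_mul_mem_of_forall_notMem_associatedPrimes fun P hP haP ↦ ha (hass P hP a haP)
  refine ⟨linearIndependent_mk_map_of_linearIndependent_mk_sup_span hsat τ hind, ?_⟩
  -- `(e :)` elaborates `e` on its own; unifying it against the expected type times out.
  exact Module.rank_le_rank_of_linearIndepOn_imp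
    (w := fun d ↦ Ideal.Quotient.mk _ (map (algebraMap K[X] (RatFunc K)) (monomial d 1)))
    (span_mk_monomial_one_eq_top (Ideal.mem_sup_right (Ideal.mem_span_singleton_self _)))
    fun s ↦ (linearIndependent_mk_map_of_linearIndependent_mk_sup_span (L := RatFunc K) hsat τ
      (μ := fun d : s ↦ monomial d 1) :)

/-- Let `K` be algebraically closed and `J'` an ideal of `K[T][X₁,…,Xₙ]` whose
associated primes contain no nonzero polynomial of `K[T]`.  If monomials
`m₁,…,m_k` in the `Xᵢ` are `K`-linearly independent modulo `J' + ⟨T - τ⟩`, then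
they are `K(T)`-linearly independent modulo the extension of `J'` to
`K(T)[X₁,…,Xₙ]`; consequently the `K`-dimension of the fiber quotient is at most
the `K(T)`-dimension of the generic quotient. -/
theorem stmt10 (K : Type*) [Field K] [IsAlgClosed K] (n k : ℕ)
    (J' : Ideal (MvPolynomial (Fin n) (Polynomial K)))
    (hass : ∀ P ∈ associatedPrimes (MvPolynomial (Fin n) (Polynomial K))
        ((MvPolynomial (Fin n) (Polynomial K)) ⧸ J'),
      ∀ a : Polynomial K, MvPolynomial.C a ∈ P → a = 0)
    (τ : K) (m : Fin k → MvPolynomial (Fin n) (Polynomial K))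
    (hm : ∀ i, ∃ d : Fin n →₀ ℕ, m i = MvPolynomial.monomial d 1)
    (hind : LinearIndependent K (fun i =>
      Ideal.Quotient.mk
        (J' ⊔ Ideal.span {MvPolynomial.C (Polynomial.X - Polynomial.C τ)}) (m i))) :
    LinearIndependent (RatFunc K) (fun i =>
      Ideal.Quotient.mk
        (Ideal.map (MvPolynomial.map (algebraMap (Polynomial K) (RatFunc K))) J')
        (MvPolynomial.map (algebraMap (Polynomial K) (RatFunc K)) (m i)))
    ∧ Module.rank K
        ((MvPolynomial (Fin n) (Polynomial K)) ⧸
          (J' ⊔ Ideal.span {MvPolynomial.C (Polynomial.X - Polynomial.C τ)}))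
      ≤ Module.rank (RatFunc K)
        ((MvPolynomial (Fin n) (RatFunc K)) ⧸
          Ideal.map (MvPolynomial.map (algebraMap (Polynomial K) (RatFunc K))) J') :=
  stmt10_general K n k J' hass τ m hind
end

section
/- Let K be an algebraically closed field of characteristic zero, S the field of Puiseux series over K in T, and B = (b_1,...,b_m) polynomials in K[T][X_1,...,X_n]. Suppose Φ and Φ' are two distinct vectors of bounded Puiseux series which are roots of B (viewing B over S), both with the same limit φ at T = 0, and suppose the Jacobian matrix of some n of the polynomials b_1(0,·),...,b_m(0,·) with respect to X is invertible at φ. Then Φ = Φ', a contradiction; i.e., distinct bounded Puiseux roots of B with invertible limit Jacobian have distinct limits at T = 0. -/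
/-!
Both roots lie in the ring `A` of Hahn series with nonnegative support. An element of `A` with
nonzero constant coefficient is a unit of `A`, and one with zero constant coefficient lies in the
Jacobson radical of `A`. Hence the Jacobian `J` at `Φ` of the `n` selected equations has a unit
determinant in `A` (its constant coefficient is the determinant at `φ`), and the ideal `I`
generated by the entries of `Δ = Φ' - Φ` lies in the Jacobson radical. Expanding the equations
at `Φ' = Φ + Δ` to first order gives `J Δ ∈ I ^ 2`, so `Δ ∈ I ^ 2` as `J` is invertible; thus
`I = I ^ 2`, and Nakayama's lemma gives `I = 0`.
-/

open MvPolynomial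

/-- Evaluation of a polynomial in `K[T][X₁,…,Xₙ]` at a vector of Hahn/Puiseux
series (sending `T` to the series `T = single 1 1`). -/
noncomputable def evalSeries {K : Type*} [Field K] {n : ℕ}
    (Φ : Fin n → HahnSeries ℚ K) (f : MvPolynomial (Fin n) (Polynomial K)) :
    HahnSeries ℚ K :=
  MvPolynomial.eval₂
    ((Polynomial.aeval (HahnSeries.single (1 : ℚ) (1 : K))).toRingHom) Φ f

open Matrix

namespace MvPolynomial

variable {R σ : Type*} [CommRing R]

noncomputable def jacobianAt {ι : Type*} (f : ι → MvPolynomial σ R) (x : σ → R) : Matrix ι σ R :=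
  Matrix.of fun i j => eval x (pderiv j (f i))

variable [Fintype σ]

theorem eval_add_sub_sub_sum_pderiv_mem_sq (f : MvPolynomial σ R) (x h : σ → R) :
    eval (x + h) f - eval x f - ∑ i, eval x (pderiv i f) * h i ∈ Ideal.span (Set.range h) ^ 2 := by
  classical
  set I := Ideal.span (Set.range h)
  have hI : ∀ i, h i ∈ I := fun i => Ideal.subset_span ⟨i, rfl⟩
  induction f using MvPolynomial.induction_on with
  | C a => simp
  | add p q hp hq =>
    convert add_mem hp hq using 1
    simp only [map_add, add_mul, Finset.sum_add_distrib]
    ring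
  | mul_X p j hp =>
    set L := ∑ i, eval x (pderiv i p) * h i
    have hL : L ∈ I := Ideal.sum_mem _ fun i _ => Ideal.mul_mem_left _ _ (hI i)
    have hsum : ∑ i, eval x (pderiv i (p * X j)) * h i = x j * L + eval x p * h j := by
      simp only [L, Derivation.leibniz, pderiv_X, Pi.single_apply, smul_eq_mul, map_add, map_mul,
        eval_X, mul_ite, mul_one, mul_zero, apply_ite (eval x), map_zero]
      simp only [add_mul, Finset.sum_add_distrib, ite_mul, zero_mul, Finset.sum_ite_eq,
        Finset.mem_univ, if_true, Finset.mul_sum, mul_assoc, add_comm]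
    rw [hsum]
    convert add_mem (Ideal.mul_mem_right (x j + h j) _ hp)
      (pow_two I ▸ Ideal.mul_mem_mul hL (hI j)) using 1
    simp only [map_mul, eval_X, Pi.add_apply]
    ring

variable [DecidableEq σ]

theorem eq_of_isUnit_det_jacobianAt_of_sub_mem_jacobson (f : σ → MvPolynomial σ R) {x y : σ → R}
    (hx : ∀ i, eval x (f i) = 0) (hy : ∀ i, eval y (f i) = 0)
    (hdet : IsUnit (jacobianAt f x).det) (hxy : ∀ i, y i - x i ∈ Ideal.jacobson ⊥) : x = y := by
  set h := y - x
  set I := Ideal.span (Set.range h)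
  have hJh : ∀ i, (jacobianAt f x *ᵥ h) i ∈ I ^ 2 := fun i => by
    have := eval_add_sub_sub_sum_pderiv_mem_sq (f i) x h
    rwa [add_sub_cancel, hy, hx, sub_self, zero_sub, neg_mem_iff] at this
  have hh : ∀ i, h i ∈ I ^ 2 := by
    rw [← one_mulVec h, ← nonsing_inv_mul _ hdet, ← mulVec_mulVec]
    exact fun i => Ideal.sum_mem _ fun j _ => Ideal.mul_mem_left _ _ (hJh j)
  have hI : I = ⊥ := Submodule.eq_bot_of_le_smul_of_le_jacobson_bot I I
    (Submodule.fg_span (Set.finite_range h))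
    (by rw [smul_eq_mul, ← pow_two]; exact Ideal.span_le.2 (Set.range_subset_iff.2 hh))
    (Ideal.span_le.2 (Set.range_subset_iff.2 hxy))
  funext i
  have : h i = 0 := by rw [← Ideal.mem_bot, ← hI]; exact Ideal.subset_span ⟨i, rfl⟩
  exact (sub_eq_zero.1 this).symm

theorem map_det_jacobianAt {S : Type*} [CommRing S] (φ : R →+* S) (f : σ → MvPolynomial σ R)
    (x : σ → R) : φ (jacobianAt f x).det = (jacobianAt (fun i => map φ (f i)) (φ ∘ x)).det := by
  rw [RingHom.map_det]
  congr 1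
  ext i j
  simp only [RingHom.mapMatrix_apply, Matrix.map_apply, jacobianAt, Matrix.of_apply, eval₂_comp,
    ← eval_map, pderiv_map]

end MvPolynomial

namespace HahnSeries

section Ring

variable {Γ R : Type*} [AddCommMonoid Γ] [PartialOrder Γ] [IsOrderedCancelAddMonoid Γ]

theorem coeff_zero_mul_of_support_nonneg [Semiring R] {x y : HahnSeries Γ R}
    (hx : ∀ q ∈ x.support, 0 ≤ q) (hy : ∀ q ∈ y.support, 0 ≤ q) :
    (x * y).coeff 0 = x.coeff 0 * y.coeff 0 := by
  rw [coeff_mul, Finset.sum_eq_single (0, 0)]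
  · rintro ⟨a, b⟩ hab hne
    obtain ⟨ha, hb, hsum⟩ := Finset.mem_antidiagonal.1 hab
    obtain ⟨rfl, rfl⟩ := (add_eq_zero_iff_of_nonneg (hx a ha) (hy b hb)).1 hsum
    exact absurd rfl hne
  · intro h0
    by_cases hx0 : x.coeff 0 = 0
    · rw [hx0, zero_mul]
    · have hy0 : y.coeff 0 = 0 := by
        by_contra hy0
        exact h0 (Finset.mem_antidiagonal.2 ⟨hx0, hy0, add_zero 0⟩)
      rw [hy0, mul_zero]

variable (Γ R) [Ring R]

def nonnegSubring : Subring (HahnSeries Γ R) where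
  carrier := {x | ∀ q ∈ x.support, 0 ≤ q}
  mul_mem' {x y} hx hy q hq := by
    obtain ⟨a, ha, b, hb, rfl⟩ := support_mul_subset hq
    exact add_nonneg (hx a ha) (hy b hb)
  one_mem' q hq := (support_single_subset hq).ge
  add_mem' {x y} hx hy q hq := (support_add_subset x y hq).elim (hx q) (hy q)
  zero_mem' q hq := absurd hq (by simp)
  neg_mem' {x} hx q hq := hx q (support_neg_subset x hq)

variable {Γ R}

theorem single_mem_nonnegSubring {g : Γ} (hg : 0 ≤ g) (r : R) :
    single g r ∈ nonnegSubring Γ R := fun _ hq => (support_single_subset hq).ge.trans' hg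

namespace nonnegSubring

def constCoeff : nonnegSubring Γ R →+* R where
  toFun x := (x : HahnSeries Γ R).coeff 0
  map_one' := by simp
  map_mul' x y := coeff_zero_mul_of_support_nonneg x.2 y.2
  map_zero' := rfl
  map_add' _ _ := rfl

theorem constCoeff_apply (x : nonnegSubring Γ R) :
    constCoeff x = (x : HahnSeries Γ R).coeff 0 :=
  rfl

noncomputable def C : R →+* nonnegSubring Γ R :=
  HahnSeries.C.codRestrict _ fun r => single_mem_nonnegSubring le_rfl r

theorem coe_C (r : R) : (C r : nonnegSubring Γ R) = HahnSeries.C (Γ := Γ) r :=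
  rfl

theorem constCoeff_C (r : R) : constCoeff (C r : nonnegSubring Γ R) = r := by
  rw [constCoeff_apply, coe_C, HahnSeries.C_apply, coeff_single_same]

end nonnegSubring

end Ring

section Field

variable {Γ R : Type*} [AddCommGroup Γ] [LinearOrder Γ] [IsOrderedAddMonoid Γ] [Field R]

namespace nonnegSubring

theorem isUnit_of_constCoeff_ne_zero {x : nonnegSubring Γ R} (hx : constCoeff x ≠ 0) :
    IsUnit x := by
  set y := (x : HahnSeries Γ R)
  have hy : y ≠ 0 := ne_zero_of_coeff_ne_zero hx
  have hord : y.order = 0 := le_antisymm (order_le_of_coeff_ne_zero hx)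
    (x.2 _ ((mem_support _ _).2 (coeff_order_eq_zero.not.2 hy)))
  have hord_inv : y⁻¹.order = 0 := by
    have := order_mul hy (inv_ne_zero hy)
    rwa [mul_inv_cancel₀ hy, order_one, hord, zero_add, eq_comm] at this
  have hinv : y⁻¹ ∈ nonnegSubring Γ R := fun q hq => hord_inv ▸ order_le_of_coeff_ne_zero hq
  exact .of_mul_eq_one ⟨y⁻¹, hinv⟩ (Subtype.ext (mul_inv_cancel₀ hy))

theorem mem_jacobson_bot_of_constCoeff_eq_zero {x : nonnegSubring Γ R}
    (hx : constCoeff x = 0) : x ∈ Ideal.jacobson ⊥ :=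
  Ideal.mem_jacobson_bot.2 fun y => isUnit_of_constCoeff_ne_zero (by simp [hx])

end nonnegSubring

end Field

end HahnSeries

namespace Puiseux

open HahnSeries nonnegSubring

variable {K : Type*} [Field K]

noncomputable def T : nonnegSubring ℚ K :=
  ⟨single 1 1, single_mem_nonnegSubring zero_le_one 1⟩

noncomputable def evalT : Polynomial K →+* nonnegSubring ℚ K :=
  Polynomial.eval₂RingHom nonnegSubring.C T

theorem subtype_comp_evalT :
    (nonnegSubring ℚ K).subtype.comp evalT =
      (Polynomial.aeval (single (1 : ℚ) (1 : K))).toRingHom := by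
  refine Polynomial.ringHom_ext (fun a => ?_) ?_
  · simp [evalT, nonnegSubring.coe_C, algebraMap_apply', ofPowerSeries_C]
  · simp [evalT, T]

theorem constCoeff_comp_evalT : constCoeff.comp evalT = Polynomial.evalRingHom (0 : K) := by
  refine Polynomial.ringHom_ext (fun a => ?_) ?_
  · simp [evalT, constCoeff_C]
  · simp [evalT, T, constCoeff_apply]

variable {n : ℕ}

theorem evalSeries_coe (x : Fin n → nonnegSubring ℚ K) (g : MvPolynomial (Fin n) (Polynomial K)) :
    evalSeries (fun j => (x j : HahnSeries ℚ K)) g = eval x (map evalT g) := by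
  rw [evalSeries, ← subtype_comp_evalT, eval_map]
  exact (eval₂_comp_left _ _ _ _).symm

theorem constCoeff_det_jacobianAt_map_evalT (g : Fin n → MvPolynomial (Fin n) (Polynomial K))
    (x : Fin n → nonnegSubring ℚ K) :
    constCoeff (jacobianAt (fun i => map evalT (g i)) x).det =
      (jacobianAt (fun i => map (Polynomial.evalRingHom 0) (g i)) (constCoeff ∘ x)).det := by
  simp only [map_det_jacobianAt, MvPolynomial.map_map, constCoeff_comp_evalT]

end Puiseux

open Puiseux HahnSeries.nonnegSubring

theorem stmt11_general (K : Type*) [Field K] (n m : ℕ)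
    (b : Fin m → MvPolynomial (Fin n) (Polynomial K))
    (Φ Φ' : Fin n → HahnSeries ℚ K)
    (hroot : ∀ i, evalSeries Φ (b i) = 0) (hroot' : ∀ i, evalSeries Φ' (b i) = 0)
    (hbdd : ∀ j, ∀ q ∈ (Φ j).support, (0 : ℚ) ≤ q)
    (hbdd' : ∀ j, ∀ q ∈ (Φ' j).support, (0 : ℚ) ≤ q)
    (hlim : ∀ j, (Φ j).coeff 0 = (Φ' j).coeff 0)
    (hjac : ∃ sel : Fin n → Fin m, Function.Injective sel ∧
      (Matrix.of fun (r c : Fin n) =>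
        MvPolynomial.eval (fun j => (Φ j).coeff 0)
          (MvPolynomial.pderiv c
            (MvPolynomial.map (Polynomial.evalRingHom (0 : K)) (b (sel r))))).det ≠ 0) :
    Φ = Φ' := by
  obtain ⟨sel, -, hdet⟩ := hjac
  let x : Fin n → HahnSeries.nonnegSubring ℚ K := fun j => ⟨Φ j, hbdd j⟩
  let y : Fin n → HahnSeries.nonnegSubring ℚ K := fun j => ⟨Φ' j, hbdd' j⟩
  have hroots (z : Fin n → HahnSeries.nonnegSubring ℚ K)
      (hz : ∀ i, evalSeries (fun j => (z j : HahnSeries ℚ K)) (b i) = 0) (r : Fin n) :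
      eval z (map evalT (b (sel r))) = 0 :=
    Subtype.ext ((evalSeries_coe z _).symm.trans (hz _))
  have hxy : x = y := eq_of_isUnit_det_jacobianAt_of_sub_mem_jacobson _ (hroots x hroot)
    (hroots y hroot')
    (isUnit_of_constCoeff_ne_zero (by rwa [constCoeff_det_jacobianAt_map_evalT]))
    (fun j => mem_jacobson_bot_of_constCoeff_eq_zero (by simp [x, y, constCoeff_apply, hlim j]))
  funext j
  exact congrArg Subtype.val (congrFun hxy j)

/-- Distinct bounded Puiseux roots of `B` with invertible limit Jacobian have
distinct limits at `T = 0`: if `Φ, Φ'` are bounded Puiseux-series roots of the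
system `B = (b₁,…,b_m) ⊆ K[T][X]`, with the same limit `φ` at `T = 0`, and the
Jacobian of some `n` of the polynomials `bᵢ(0,·)` is invertible at `φ`, then
`Φ = Φ'`. -/
theorem stmt11 (K : Type*) [Field K] [IsAlgClosed K] [CharZero K] (n m : ℕ)
    (b : Fin m → MvPolynomial (Fin n) (Polynomial K))
    (Φ Φ' : Fin n → HahnSeries ℚ K)
    (hroot : ∀ i, evalSeries Φ (b i) = 0) (hroot' : ∀ i, evalSeries Φ' (b i) = 0)
    (hbdd : ∀ j, ∀ q ∈ (Φ j).support, (0 : ℚ) ≤ q)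
    (hbdd' : ∀ j, ∀ q ∈ (Φ' j).support, (0 : ℚ) ≤ q)
    (hPui : ∀ j, ∃ N : ℕ, 0 < N ∧ ∀ q ∈ (Φ j).support, ∃ z : ℤ, q = (z : ℚ) / N)
    (hPui' : ∀ j, ∃ N : ℕ, 0 < N ∧ ∀ q ∈ (Φ' j).support, ∃ z : ℤ, q = (z : ℚ) / N)
    (hlim : ∀ j, (Φ j).coeff 0 = (Φ' j).coeff 0)
    (hjac : ∃ sel : Fin n → Fin m, Function.Injective sel ∧
      (Matrix.of fun (r c : Fin n) =>
        MvPolynomial.eval (fun j => (Φ j).coeff 0)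
          (MvPolynomial.pderiv c
            (MvPolynomial.map (Polynomial.evalRingHom (0 : K)) (b (sel r))))).det ≠ 0) :
    Φ = Φ' :=
  stmt11_general K n m b Φ Φ' hroot hroot' hbdd hbdd' hlim hjac
end

section
/- Let K be algebraically closed, and let N be a p×q matrix over K[X_1,...,X_n] (n = q-p+1) of the block form [D | A] where D is p×p diagonal with diagonal entries λ_{1,1},...,λ_{p,p} and A has entries λ_{i,j} for j > p. Then a point x lies in the vanishing set of all p-minors of N if and only if there is a nonempty subset i_1 < ... < i_κ of {1,...,p} such that λ_{i_k,i_k}(x) = 0 for k=1,...,κ, λ_{i,i}(x) ≠ 0 for i outside this set, and the κ×(q-p) submatrix of A on rows i_1,...,i_κ has rank less than κ at x. -/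
/-!
All `p`-minors of `M = N(x)` vanish iff the rows of `M` are linearly dependent. In a dependency
`∑ gᵢ Mᵢ = 0`, the diagonal column of row `j` reads `gⱼ Mⱼⱼ = 0`, so only the rows in
`I = {i | Mᵢᵢ = 0}` can occur; those rows vanish on the diagonal block, so the dependencies
of `M` are exactly those of the rows of the right-hand block `A(x)` indexed by `I`,
i.e. `rank A_I < |I|`.
-/

open Module Submodule

namespace Matrix

variable {K m n : Type*} [Field K] [Fintype m]

theorem rank_lt_card_height_iff_not_linearIndependent_rows [Fintype n] (A : Matrix m n K) :
    A.rank < Fintype.card m ↔ ¬ LinearIndependent K A.row := by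
  have := A.rank_le_card_height
  rw [rank_eq_finrank_span_row] at this ⊢
  rw [linearIndependent_iff_card_eq_finrank_span, Set.finrank]
  omega

theorem exists_det_submatrix_ne_zero_iff_linearIndependent_rows [Fintype n] [DecidableEq m]
    (A : Matrix m n K) :
    (∃ c : m ↪ n, (A.submatrix id c).det ≠ 0) ↔ LinearIndependent K A.row := by
  constructor
  · rintro ⟨c, hc⟩
    have hsub : LinearIndependent K (A.submatrix id c).row :=
      linearIndependent_rows_iff_isUnit.2 ((isUnit_iff_isUnit_det _).2 hc.isUnit)
    exact hsub.of_comp (LinearMap.funLeft K K c)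
  · intro h
    have hcols : span K (Set.range A.col) = ⊤ := by
      apply eq_top_of_finrank_eq
      rw [← rank_eq_finrank_span_cols, h.rank_matrix, finrank_fintype_fun_eq_card]
    obtain ⟨κ, a, ha, hspan, hli⟩ := exists_linearIndependent' K A.col
    have : Fintype κ := Fintype.ofInjective a ha
    let b := Basis.mk hli (by rw [hspan, hcols])
    let e : m ≃ κ := Fintype.equivOfCardEq
      (by rw [← finrank_eq_card_basis b, finrank_fintype_fun_eq_card])
    refine ⟨⟨a ∘ e, ha.comp e.injective⟩, ?_⟩
    rw [← isUnit_iff_ne_zero, ← isUnit_iff_isUnit_det, ← linearIndependent_cols_iff_isUnit]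
    exact hli.comp e e.injective

theorem linearIndependent_rows_iff_of_diagonal_block {n' : Type*} (A : Matrix m n K)
    (d : m → n) (r : n' → n) (hcover : ∀ c, (∃ i, d i = c) ∨ ∃ k, r k = c)
    (hdiag : ∀ i j, i ≠ j → A i (d j) = 0) (I : Finset m)
    (hI : ∀ i, i ∈ I ↔ A i (d i) = 0) :
    LinearIndependent K A.row ↔ LinearIndependent K (A.submatrix ((↑) : I → m) r).row := by
  classical
  have eval_d (g : m → K) (j : m) : (∑ i, g i • A.row i) (d j) = g j * A j (d j) := by
    simp only [Finset.sum_apply, Pi.smul_apply, smul_eq_mul, row_apply]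
    exact Finset.sum_eq_single j (fun i _ hij => by rw [hdiag i j hij, mul_zero]) (by simp)
  have eval_r (g : m → K) (hg : ∀ i ∉ I, g i = 0) (k : n') :
      (∑ i, g i • A.row i) (r k) = (∑ i : I, g i • (A.submatrix (↑) r).row i) k := by
    simp only [Finset.sum_apply, Pi.smul_apply, smul_eq_mul, row_apply, submatrix_apply,
      Finset.sum_coe_sort I (fun i => g i * A i (r k))]
    refine (Finset.sum_subset (Finset.subset_univ I) fun i _ hi => ?_).symm
    rw [hg i hi, zero_mul]
  simp only [Fintype.linearIndependent_iff]
  constructor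
  · intro hA h hh i
    let g : m → K := fun i => if hi : i ∈ I then h ⟨i, hi⟩ else 0
    have hg : ∀ i ∉ I, g i = 0 := fun i hi => dif_neg hi
    have hsum : ∑ i, g i • A.row i = 0 := by
      funext c
      rcases hcover c with ⟨j, rfl⟩ | ⟨k, rfl⟩
      · rw [eval_d]
        by_cases hj : j ∈ I
        · rw [(hI j).1 hj, mul_zero, Pi.zero_apply]
        · rw [hg j hj, zero_mul, Pi.zero_apply]
      · rw [eval_r g hg]
        simpa [g] using congrFun hh k
    simpa [g] using hA g hsum i
  · intro hQ g hg
    have off : ∀ i ∉ I, g i = 0 := fun i hi =>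
      (mul_eq_zero.1 ((eval_d g i).symm.trans (congrFun hg (d i)))).resolve_right
        (mt (hI i).2 hi)
    have on := hQ (fun i => g i) <|
      funext fun k => (eval_r g off k).symm.trans (congrFun hg (r k))
    intro i
    by_cases hi : i ∈ I
    · exact on ⟨i, hi⟩
    · exact off i hi

end Matrix

/-- Rank-deficiency characterization for block matrices `N = [D | A]`: let `K` be
algebraically closed and `N` a `p×q` polynomial matrix in `n = q - p + 1`
variables whose first `p` columns are diagonal (off-diagonal entries zero).
A point `x` is a common zero of all `p`-minors of `N` if and only if there is a
nonempty set `I ⊆ {1,…,p}` such that the diagonal entries indexed by `I` vanish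
at `x`, the other diagonal entries do not, and the submatrix of the last `q - p`
columns on the rows of `I` has rank `< |I|` at `x`. -/
theorem stmt17 (K : Type*) [Field K]
    (p q n : ℕ) (hpq : p ≤ q)
    (N : Matrix (Fin p) (Fin q) (MvPolynomial (Fin n) K))
    (hdiag : ∀ i j : Fin p, i ≠ j → N i (Fin.castLE hpq j) = 0)
    (x : Fin n → K) :
    (∀ c : Fin p ↪ Fin q, ((N.map (MvPolynomial.eval x)).submatrix id c).det = 0) ↔
      ∃ I : Finset (Fin p), I.Nonempty ∧
        (∀ i ∈ I, MvPolynomial.eval x (N i (Fin.castLE hpq i)) = 0) ∧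
        (∀ i ∉ I, MvPolynomial.eval x (N i (Fin.castLE hpq i)) ≠ 0) ∧
        (Matrix.of fun (i : ↥I) (j : Fin (q - p)) =>
            MvPolynomial.eval x
              (N i.val (Fin.cast (by omega) (Fin.natAdd p j)))).rank < I.card := by
  classical
  set M := N.map (MvPolynomial.eval x)
  have hpq' : p + (q - p) = q := by omega
  have hcover (c : Fin q) :
      (∃ i : Fin p, Fin.castLE hpq i = c) ∨
        ∃ k : Fin (q - p), Fin.cast hpq' (Fin.natAdd p k) = c := by
    by_cases hc : (c : ℕ) < p
    · exact Or.inl ⟨⟨c, hc⟩, rfl⟩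
    · refine Or.inr ⟨⟨c - p, by omega⟩, Fin.ext ?_⟩
      simp only [Fin.val_cast, Fin.val_natAdd]
      omega
  have hMdiag (i j : Fin p) (hij : i ≠ j) : M i (Fin.castLE hpq j) = 0 := by
    simp [M, hdiag i j hij]
  have hminors (I : Finset (Fin p)) (hI : ∀ i, i ∈ I ↔ M i (Fin.castLE hpq i) = 0) :
      (∀ c : Fin p ↪ Fin q, (M.submatrix id c).det = 0) ↔
        (M.submatrix ((↑) : I → Fin p) fun k => Fin.cast hpq' (Fin.natAdd p k)).rank
          < I.card := by
    rw [← Fintype.card_coe I, Matrix.rank_lt_card_height_iff_not_linearIndependent_rows,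
      ← M.linearIndependent_rows_iff_of_diagonal_block _ _ hcover hMdiag I hI,
      ← M.exists_det_submatrix_ne_zero_iff_linearIndependent_rows, not_exists_not]
  constructor
  · intro h
    let I := Finset.univ.filter fun i => M i (Fin.castLE hpq i) = 0
    have hrank := (hminors I fun i => by simp [I]).1 h
    exact ⟨I, Finset.card_pos.1 (Nat.zero_lt_of_lt hrank), fun i hi => (Finset.mem_filter.1 hi).2,
      fun i hi h0 => hi (Finset.mem_filter.2 ⟨Finset.mem_univ i, h0⟩), hrank⟩
  · rintro ⟨I, -, hzero, hnonzero, hrank⟩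
    exact (hminors I fun i => ⟨hzero i, fun h0 => by_contra (hnonzero i · h0)⟩).2 hrank
end
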